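/- arXiv:1511.04478 — 2 statements merged into one kernel-verified Lean document; each statement's English description precedes it below -/
import Mathlib

section
/- k-error detection in the output via full-rank weights: let W ∈ ℝⁿˣᵏ be such that every k × k submatrix formed by choosing any k rows of W is invertible. Let y = Ax and let ỹ differ from y in exactly k′ ≤ k positions (each by a nonzero amount). Then Wᵀỹ ≠ Wᵀy; equivalently, Wᵀỹ ≠ (WᵀA)x. -/
theorem k_error_detection_output (n k : ℕ) (hkn : k ≤ n)
    (A : Matrix (Fin n) (Fin n) ℝ) (x : Fin n → ℝ)
    (W : Matrix (Fin n) (Fin k) ℝ)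
    (hW : ∀ f : Fin k → Fin n, Function.Injective f →
      (Matrix.of fun i j => W (f i) j).det ≠ 0)
    (e : Fin n → ℝ) (k' : ℕ) (hk1 : 1 ≤ k') (hk : k' ≤ k)
    (he : (Finset.univ.filter fun i => e i ≠ 0).card = k') :
    W.transpose.mulVec (A.mulVec x + e) ≠ W.transpose.mulVec (A.mulVec x) := by
  intro hEq
  set S := Finset.univ.filter fun i => e i ≠ 0 with hS
  have hWe : W.transpose.mulVec e = 0 := by
    have := hEq
    rw [Matrix.mulVec_add] at this
    have h2 : W.transpose.mulVec (A.mulVec x) + W.transpose.mulVec e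
        = W.transpose.mulVec (A.mulVec x) + 0 := by rw [add_zero]; exact this
    exact add_left_cancel h2
  -- get superset T of S with card k
  have hScard : S.card ≤ k := by rw [he]; exact hk
  obtain ⟨T, hST, hT⟩ := Finset.exists_superset_card_eq hScard
    (by simpa [Fintype.card_fin] using hkn)
  set f : Fin k → Fin n := fun i => T.orderEmbOfFin hT i
  have hfinj : Function.Injective f := (T.orderEmbOfFin hT).injective
  have himg : Finset.univ.image f = T := by
    ext a
    simp only [Finset.mem_image, Finset.mem_univ, true_and]
    constructor
    · rintro ⟨i, rfl⟩; exact T.orderEmbOfFin_mem hT i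
    · intro ha
      have := T.range_orderEmbOfFin hT
      have : a ∈ Set.range (T.orderEmbOfFin hT) := by rw [this]; exact ha
      obtain ⟨i, hi⟩ := this
      exact ⟨i, hi⟩
  set M : Matrix (Fin k) (Fin k) ℝ := Matrix.of fun i j => W (f i) j with hM
  have hMdet : M.det ≠ 0 := hW f hfinj
  have hMT : M.transpose.mulVec (fun i => e (f i)) = 0 := by
    funext j
    have hcol : ∑ i, W i j * e i = 0 := congrFun hWe j
    have hsub : ∑ i ∈ T, W i j * e i = ∑ i, W i j * e i := by
      apply Finset.sum_subset (Finset.subset_univ T)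
      intro i _ hiT
      have : e i = 0 := by
        by_contra h
        exact hiT (hST (by simp [hS, h]))
      simp [this]
    have hbij : ∑ i, W (f i) j * e (f i) = ∑ i ∈ T, W i j * e i := by
      rw [← himg, Finset.sum_image (fun a _ b _ h => hfinj h)]
    show ∑ i, M i j * e (f i) = 0
    calc ∑ i, M i j * e (f i) = ∑ i, W (f i) j * e (f i) := rfl
      _ = ∑ i ∈ T, W i j * e i := hbij
      _ = ∑ i, W i j * e i := hsub
      _ = 0 := hcol
  have hMTinj : Function.Injective M.transpose.mulVec := by
    rw [Matrix.mulVec_injective_iff_isUnit, Matrix.isUnit_iff_isUnit_det,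
      Matrix.det_transpose, isUnit_iff_ne_zero]
    exact hMdet
  have hef : (fun i => e (f i)) = 0 := by
    apply hMTinj
    rw [hMT, Matrix.mulVec_zero]
  -- S nonempty
  have hSne : S.Nonempty := Finset.card_pos.mp (by rw [he]; exact hk1)
  obtain ⟨i0, hi0⟩ := hSne
  have hei0 : e i0 ≠ 0 := by simpa [hS] using hi0
  have hi0T : i0 ∈ T := hST hi0
  have : i0 ∈ Finset.univ.image f := by rw [himg]; exact hi0T
  obtain ⟨j, -, hj⟩ := Finset.mem_image.mp this
  exact hei0 (by rw [← hj]; exact congrFun hef j)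
end

section
/- k-error detection in the input vector via shifted weights: let W ∈ ℝⁿˣᵏ be a weight matrix whose every square submatrix has full rank, let M = Wᵀ − WᵀA (so that WᵀA + M = Wᵀ as k × n matrices), let x′ = x, and let x̃ = x + e where e has k′ ≤ k nonzero entries (1 ≤ k′). Set ỹ = A x̃. Then Wᵀỹ + M x̃ = Wᵀx′ + Wᵀ|_{rows p₁..p_{k′}} applied to the nonzero errors; in particular Wᵀỹ + M x̃ ≠ Wᵀx′. -/
theorem k_error_detection_input (n k : ℕ) (A : Matrix (Fin n) (Fin n) ℝ)
    (x x' : Fin n → ℝ) (hx' : x' = x)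
    (W : Matrix (Fin n) (Fin k) ℝ)
    (hW : ∀ (m : ℕ), m ≤ k → ∀ (f : Fin m → Fin n) (g : Fin m → Fin k),
      Function.Injective f → Function.Injective g →
      (Matrix.of fun i j => W (f i) (g j)).det ≠ 0)
    (M : Matrix (Fin k) (Fin n) ℝ) (hM : M = W.transpose - W.transpose * A)
    (k' : ℕ) (hk1 : 1 ≤ k') (hk : k' ≤ k)
    (p : Fin k' → Fin n) (hp : Function.Injective p)
    (ε : Fin k' → ℝ) (hε : ∀ j, ε j ≠ 0)
    (e : Fin n → ℝ) (he : e = fun i => ∑ j, if i = p j then ε j else 0)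
    (xt yt : Fin n → ℝ) (hxt : xt = x + e) (hyt : yt = A.mulVec xt) :
    (W.transpose.mulVec yt + M.mulVec xt
        = W.transpose.mulVec x' + fun l => ∑ j, ε j * W (p j) l) ∧
      W.transpose.mulVec yt + M.mulVec xt ≠ W.transpose.mulVec x' := by
  have hWe : W.transpose.mulVec e = fun l => ∑ j, ε j * W (p j) l := by
    funext l
    simp only [Matrix.mulVec, dotProduct, he, Matrix.transpose_apply,
      Finset.mul_sum, mul_ite, mul_zero]
    rw [Finset.sum_comm]
    simp [mul_comm]
  have hmain : W.transpose.mulVec yt + M.mulVec xt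
      = W.transpose.mulVec x' + fun l => ∑ j, ε j * W (p j) l := by
    rw [hM, Matrix.sub_mulVec, hyt, Matrix.mulVec_mulVec]
    have hc : ∀ a b : Fin k → ℝ, a + (b - a) = b := fun a b => by abel
    rw [hc, hxt, Matrix.mulVec_add, hWe, hx']
  refine ⟨hmain, ?_⟩
  intro hcon
  have h0 : (fun l => ∑ j, ε j * W (p j) l) = 0 := by
    have := hmain.symm.trans hcon
    exact (left_eq_add).mp this.symm
  set N : Matrix (Fin k') (Fin k') ℝ :=
    Matrix.of fun i j => W (p i) (Fin.castLE hk j) with hN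
  have hdet : N.det ≠ 0 := hW k' hk p (Fin.castLE hk) hp (Fin.castLE_injective hk)
  have hv : N.vecMul ε = 0 := by
    funext j
    have := congrFun h0 (Fin.castLE hk j)
    simpa [Matrix.vecMul, dotProduct, hN] using this
  have hε0 : ε = 0 := by
    have h2 := congrArg (fun v => Matrix.vecMul v N⁻¹) hv
    simpa [Matrix.vecMul_vecMul, Matrix.mul_nonsing_inv N (isUnit_iff_ne_zero.mpr hdet)]
      using h2
  exact hε ⟨0, hk1⟩ (by rw [hε0]; rfl)
end
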